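/- arXiv:2508.19608 — 2 statements merged into one kernel-verified Lean document; each statement's English description precedes it below -/
import Mathlib

section
/- Let Γ, Θ > 0 and N_d, Ṅ_d : ℝ → ℝ bounded with Γ ≥ ‖N_d‖_∞ + ‖Ṅ_d‖_∞. Then for every real e and every t, e·(N_d(t) - Ṅ_d(t)) - Γ·e·tanh(Θ·e) ≤ Γ·|e|·(1 - tanh(Θ·|e|)) ≤ (Γ/Θ)·c, where c = 0.2785. -/
open Real

lemma exp_1_2784_bounds : 3.5908 ≤ exp 1.2784 ∧ exp 1.2784 ≤ 3.5909 := by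
  have hsplit : exp 1.2784 = exp 1 * exp 0.2784 := by rw [← exp_add]; norm_num
  have hlow : 1.320983 ≤ exp 0.2784 := by
    have h := sum_le_exp_of_nonneg (x := 0.2784) (by norm_num) 5
    norm_num [Finset.sum_range_succ, Nat.factorial] at h
    linarith
  have hhigh : exp 0.2784 ≤ 1.321017 := by
    have h := exp_bound' (x := 0.2784) (by norm_num) (by norm_num) (n := 5) (by norm_num)
    norm_num [Finset.sum_range_succ, Nat.factorial] at h
    linarith
  rw [hsplit]
  constructor
  · calc (3.5908 : ℝ) ≤ 2.7182818283 * 1.320983 := by norm_num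
      _ ≤ exp 1 * exp 0.2784 := by gcongr; exact exp_one_gt_d9.le
  · calc exp 1 * exp 0.2784 ≤ 2.7182818286 * 1.321017 := by gcongr; exact exp_one_lt_d9.le
      _ ≤ 3.5909 := by norm_num

/-- The constant `0.2785` is just above `max (u / (exp u + 1))`, attained near `u = 1.2785`; the
proof compares `exp` with its tangent line at `1.2784`. -/
lemma le_mul_exp_add_one (u : ℝ) : u ≤ 0.2785 * (exp u + 1) := by
  obtain ⟨hlow, hhigh⟩ := exp_1_2784_bounds
  rcases le_total u 0 with hu | hu
  · nlinarith [exp_pos u]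
  have htangent : exp 1.2784 * (u - 1.2784 + 1) ≤ exp u := by
    calc exp 1.2784 * (u - 1.2784 + 1) ≤ exp 1.2784 * exp (u - 1.2784) := by
          gcongr; exact add_one_le_exp _
      _ = exp u := by rw [← exp_add]; ring_nf
  nlinarith [mul_nonneg hu (by linarith : (0 : ℝ) ≤ 0.2785 * exp 1.2784 - 1)]

lemma one_sub_tanh_eq (x : ℝ) : 1 - tanh x = 2 / (exp (2 * x) + 1) := by
  have h2x : exp (2 * x) = exp x * exp x := by rw [← exp_add]; ring_nf
  have hpos := exp_pos x
  rw [tanh_eq, exp_neg, h2x]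
  field_simp
  ring

lemma mul_one_sub_tanh_le (x : ℝ) : x * (1 - tanh x) ≤ 0.2785 := by
  have hden : 0 < exp (2 * x) + 1 := by positivity
  rw [one_sub_tanh_eq, mul_div_assoc', div_le_iff₀ hden]
  linarith [le_mul_exp_add_one (2 * x)]

lemma mul_tanh_mul_abs (Θ e : ℝ) : e * tanh (Θ * e) = |e| * tanh (Θ * |e|) := by
  rcases abs_cases e with ⟨he, -⟩ | ⟨he, -⟩
  · rw [he]
  · rw [he, mul_neg, tanh_neg, neg_mul_neg]

theorem O_bound (Γ Θ : ℝ) (hΓ : 0 < Γ) (hΘ : 0 < Θ)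
    (Nd Nd' : ℝ → ℝ) (B B' : ℝ)
    (hB : ∀ t : ℝ, |Nd t| ≤ B) (hB' : ∀ t : ℝ, |Nd' t| ≤ B')
    (hΓbound : B + B' ≤ Γ) (e t : ℝ) :
    e * (Nd t - Nd' t) - Γ * e * Real.tanh (Θ * e) ≤
      Γ * |e| * (1 - Real.tanh (Θ * |e|)) ∧
    Γ * |e| * (1 - Real.tanh (Θ * |e|)) ≤ Γ / Θ * 0.2785 := by
  have hdisturbance : e * (Nd t - Nd' t) ≤ Γ * |e| :=
    calc e * (Nd t - Nd' t) ≤ |e| * |Nd t - Nd' t| := (le_abs_self _).trans_eq (abs_mul _ _)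
      _ ≤ |e| * Γ := by gcongr; linarith [abs_sub (Nd t) (Nd' t), hB t, hB' t]
      _ = Γ * |e| := mul_comm _ _
  refine ⟨?_, ?_⟩
  · rw [mul_assoc Γ e, mul_tanh_mul_abs]
    linarith
  · calc Γ * |e| * (1 - tanh (Θ * |e|)) = Γ / Θ * (Θ * |e| * (1 - tanh (Θ * |e|))) := by
          field_simp
      _ ≤ Γ / Θ * 0.2785 := by gcongr; exact mul_one_sub_tanh_le _
end

section
/- Let R, R_d ∈ SO(3) evolve with body angular velocities ω, ω_d, and define e_R = ½(Rᵀ R_d - R_dᵀ R)^∨, e_ω = Rᵀ R_d ω_d - ω, and C = ½[tr(Rᵀ R_d)·I₃ - Rᵀ R_d]. Then ė_R = C·e_ω. -/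
open Matrix

/-- The hat map sending a vector in ℝ³ to the corresponding skew-symmetric matrix. -/
def hat (v : Fin 3 → ℝ) : Matrix (Fin 3) (Fin 3) ℝ :=
  !![0, -v 2, v 1; v 2, 0, -v 0; -v 1, v 0, 0]

/-- Inverse of the hat map. -/
def vee (A : Matrix (Fin 3) (Fin 3) ℝ) : Fin 3 → ℝ :=
  ![A 2 1, A 0 2, A 1 0]

/-!
Write `Q = Rᵀ R_d`, so that `e_R = ½ (Q - Qᵀ)^∨`. The kinematics give `Q̇ = Q ω_d^∧ - ω^∧ Q`, and
since `Q` is a rotation, `Q ω_d^∧ = (Q ω_d)^∧ Q`; hence `Q̇ = e_ω^∧ Q`. Finally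
`e_ω^∧ Q + Qᵀ e_ω^∧ = ((tr Q · I - Q) e_ω)^∧` holds for every matrix `Q`, and applying `½ (·)^∨`
to `Q̇ - Q̇ᵀ` gives `C e_ω`.
-/

theorem hat_transpose (x : Fin 3 → ℝ) : (hat x)ᵀ = -hat x := by
  ext i j; fin_cases i <;> fin_cases j <;> simp [hat]

theorem hat_sub (x y : Fin 3 → ℝ) : hat (x - y) = hat x - hat y := by
  ext i j; fin_cases i <;> fin_cases j <;> simp [hat] <;> ring

theorem vee_hat (x : Fin 3 → ℝ) : vee (hat x) = x := by
  ext i; fin_cases i <;> simp [vee, hat]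

theorem vee_smul (c : ℝ) (A : Matrix (Fin 3) (Fin 3) ℝ) : vee (c • A) = c • vee A := by
  ext i; fin_cases i <;> simp [vee]

theorem hat_mul_add_transpose_mul_hat (A : Matrix (Fin 3) (Fin 3) ℝ) (x : Fin 3 → ℝ) :
    hat x * A + Aᵀ * hat x = hat ((A.trace • 1 - A) *ᵥ x) := by
  ext i j
  fin_cases i <;> fin_cases j <;>
    simp [hat, mul_apply, mulVec, vecMul, dotProduct, Fin.sum_univ_three, trace_fin_three,
      one_apply] <;>
    ring

/-- The matrix form of `(A a) × (A b) = (adj A)ᵀ (a × b)`. -/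
theorem hat_mulVec_mul (A : Matrix (Fin 3) (Fin 3) ℝ) (x : Fin 3 → ℝ) :
    hat (A *ᵥ x) * A = (adjugate A)ᵀ * hat x := by
  ext i j
  fin_cases i <;> fin_cases j <;>
    simp [hat, adjugate_fin_three, mul_apply, mulVec, dotProduct, Fin.sum_univ_three] <;>
    ring

theorem adjugate_eq_transpose_of_special_orthogonal {n α : Type*} [Fintype n] [DecidableEq n]
    [CommRing α] {Q : Matrix n n α} (hQ : Qᵀ * Q = 1) (hdet : Q.det = 1) :
    adjugate Q = Qᵀ :=
  calc adjugate Q = adjugate Q * Q * Qᵀ := by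
        rw [Matrix.mul_assoc, mul_eq_one_comm.mp hQ, Matrix.mul_one]
    _ = Qᵀ := by rw [adjugate_mul, hdet, one_smul, Matrix.one_mul]

theorem mul_hat_of_special_orthogonal {Q : Matrix (Fin 3) (Fin 3) ℝ} (hQ : Qᵀ * Q = 1)
    (hdet : Q.det = 1) (x : Fin 3 → ℝ) : Q * hat x = hat (Q *ᵥ x) * Q := by
  rw [hat_mulVec_mul, adjugate_eq_transpose_of_special_orthogonal hQ hdet, transpose_transpose]

theorem vee_skew_hat_mul (A : Matrix (Fin 3) (Fin 3) ℝ) (x : Fin 3 → ℝ) :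
    vee ((1 / 2 : ℝ) • (hat x * A - (hat x * A)ᵀ)) = ((1 / 2 : ℝ) • (A.trace • 1 - A)) *ᵥ x := by
  rw [transpose_mul, hat_transpose, mul_neg, sub_neg_eq_add, hat_mul_add_transpose_mul_hat,
    vee_smul, vee_hat, smul_mulVec]

theorem hasDerivAt_mul_apply {m n p : Type*} [Fintype n] {t : ℝ}
    {A : ℝ → Matrix m n ℝ} {B : ℝ → Matrix n p ℝ} {A' : Matrix m n ℝ} {B' : Matrix n p ℝ}
    (hA : ∀ i j, HasDerivAt (fun τ => A τ i j) (A' i j) t)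
    (hB : ∀ i j, HasDerivAt (fun τ => B τ i j) (B' i j) t) (i : m) (k : p) :
    HasDerivAt (fun τ => (A τ * B τ) i k) ((A' * B t + A t * B') i k) t := by
  rw [Matrix.add_apply, mul_apply, mul_apply, ← Finset.sum_add_distrib]
  exact HasDerivAt.fun_sum fun j _ => (hA i j).mul (hB j k)

theorem hasDerivAt_vee_skew_apply {t : ℝ} {A : ℝ → Matrix (Fin 3) (Fin 3) ℝ}
    {A' : Matrix (Fin 3) (Fin 3) ℝ} (hA : ∀ i j, HasDerivAt (fun τ => A τ i j) (A' i j) t)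
    (i : Fin 3) :
    HasDerivAt (fun τ => vee ((1 / 2 : ℝ) • (A τ - (A τ)ᵀ)) i)
      (vee ((1 / 2 : ℝ) • (A' - A'ᵀ)) i) t := by
  fin_cases i <;> exact ((hA _ _).sub (hA _ _)).const_mul _

theorem hasDerivAt_transpose_mul_apply {t : ℝ} {R Rd : ℝ → Matrix (Fin 3) (Fin 3) ℝ}
    {w wd : Fin 3 → ℝ}
    (hR : ∀ i j, HasDerivAt (fun τ => R τ i j) ((R t * hat w) i j) t)
    (hRd : ∀ i j, HasDerivAt (fun τ => Rd τ i j) ((Rd t * hat wd) i j) t)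
    (hQ : ((R t)ᵀ * Rd t)ᵀ * ((R t)ᵀ * Rd t) = 1) (hdet : ((R t)ᵀ * Rd t).det = 1) (i j : Fin 3) :
    HasDerivAt (fun τ => ((R τ)ᵀ * Rd τ) i j)
      ((hat (((R t)ᵀ * Rd t) *ᵥ wd - w) * ((R t)ᵀ * Rd t)) i j) t := by
  have hQdot : (R t * hat w)ᵀ * Rd t + (R t)ᵀ * (Rd t * hat wd)
      = hat (((R t)ᵀ * Rd t) *ᵥ wd - w) * ((R t)ᵀ * Rd t) := by
    rw [transpose_mul, hat_transpose, ← Matrix.mul_assoc, mul_hat_of_special_orthogonal hQ hdet,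
      hat_sub, sub_mul, neg_mul, neg_mul, Matrix.mul_assoc]
    abel
  rw [← hQdot]
  exact hasDerivAt_mul_apply (A := fun τ => (R τ)ᵀ) (fun i j => hR j i) hRd i j

theorem attitude_error_kinematics
    (R Rd : ℝ → Matrix (Fin 3) (Fin 3) ℝ) (ω ωd : ℝ → Fin 3 → ℝ)
    (hRSO : ∀ t, (R t).transpose * R t = 1 ∧ (R t).det = 1)
    (hRdSO : ∀ t, (Rd t).transpose * Rd t = 1 ∧ (Rd t).det = 1)
    (hkin : ∀ t, ∀ i j, HasDerivAt (fun τ => R τ i j) ((R t * hat (ω t)) i j) t)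
    (hkind : ∀ t, ∀ i j, HasDerivAt (fun τ => Rd τ i j) ((Rd t * hat (ωd t)) i j) t)
    (eR : ℝ → Fin 3 → ℝ)
    (heR : ∀ t, eR t = vee ((1 / 2 : ℝ) • ((R t).transpose * Rd t - (Rd t).transpose * R t)))
    (eω : ℝ → Fin 3 → ℝ)
    (heω : ∀ t, eω t = ((R t).transpose * Rd t).mulVec (ωd t) - ω t)
    (C : ℝ → Matrix (Fin 3) (Fin 3) ℝ)
    (hC : ∀ t, C t = (1 / 2 : ℝ) •
      (Matrix.trace ((R t).transpose * Rd t) • (1 : Matrix (Fin 3) (Fin 3) ℝ)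
        - (R t).transpose * Rd t))
    (t : ℝ) (i : Fin 3) :
    HasDerivAt (fun τ => eR τ i) ((C t).mulVec (eω t) i) t := by
  have hQ : ((R t)ᵀ * Rd t)ᵀ * ((R t)ᵀ * Rd t) = 1 := by
    rw [transpose_mul, transpose_transpose, Matrix.mul_assoc, ← Matrix.mul_assoc (R t),
      mul_eq_one_comm.mp (hRSO t).1, Matrix.one_mul, (hRdSO t).1]
  have hdet : ((R t)ᵀ * Rd t).det = 1 := by
    rw [det_mul, det_transpose, (hRSO t).2, (hRdSO t).2, mul_one]
  have heR_skew : (fun τ => eR τ i)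
      = fun τ => vee ((1 / 2 : ℝ) • ((R τ)ᵀ * Rd τ - ((R τ)ᵀ * Rd τ)ᵀ)) i := by
    funext τ
    rw [heR, transpose_mul, transpose_transpose]
  rw [heR_skew, hC, heω, ← vee_skew_hat_mul]
  exact hasDerivAt_vee_skew_apply (hasDerivAt_transpose_mul_apply (hkin t) (hkind t) hQ hdet) i
end
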